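/- arXiv:1607.04005 — 3 statements merged into one kernel-verified Lean document; each statement's English description precedes it below -/
import Mathlib

section
/- Let ξ : [0,1] → ℝ² be a continuous map of finite total variation and let C = ξ([0,1]) be its image. Then the arc length of ξ satisfies ℓ(ξ) ≥ ∫₀^{2π} h_C(θ) dθ − ‖ξ(1) − ξ(0)‖. -/
open Set Real RealInnerProductSpace

noncomputable section

/-- The Euclidean plane ℝ². -/
abbrev Plane := EuclideanSpace ℝ (Fin 2)

/-- Unit vector at angle `θ`. -/
def uvec (θ : ℝ) : Plane := WithLp.toLp 2 ![Real.cos θ, Real.sin θ]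

/-- Support function of a set `C ⊆ ℝ²` at angle `θ`. -/
def supp (C : Set Plane) (θ : ℝ) : ℝ := sSup ((fun x => ⟪x, uvec θ⟫) '' C)

/-- Length of a curve: its total variation on `[0,1]`. -/
def plen (ξ : ℝ → Plane) : ℝ := (eVariationOn ξ (Icc 0 1)).toReal

/-!
Sample `ξ` at the points `i / k`. The support functions of the finite sets `{ξ (i / k) | i ≤ k}`
are uniformly bounded and converge pointwise to `h_C`, because `⟪ξ ·, u θ⟫` attains its maximum on
`[0, 1]` and the samples accumulate at the maximiser; by dominated convergence it therefore
suffices to bound their integrals by the length of the closed polygon through the samples,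
which is at most `ℓ(ξ) + ‖ξ 1 - ξ 0‖`.
This goes by induction on the number of vertices: adding `q (n + 1)` raises the support function by
at most `max (min ⟪a, u θ⟫ ⟪b, u θ⟫) 0` with `a = q (n + 1) - q n` and `b = q (n + 1) - q 0`, and
since `∫ |⟪v, u θ⟫| dθ = 4 ‖v‖` that bound integrates to `‖a‖ + ‖b‖ - ‖a - b‖`, which is exactly
the growth of the polygon's length.
-/

open Filter Topology intervalIntegral

lemma inner_uvec (v : Plane) (θ : ℝ) : ⟪v, uvec θ⟫ = v 0 * cos θ + v 1 * sin θ := by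
  simp only [uvec, PiLp.inner_apply, RCLike.inner_apply, ringHom_apply, Fin.sum_univ_two,
    Matrix.cons_val_zero, Matrix.cons_val_one]
  ring

lemma norm_uvec (θ : ℝ) : ‖uvec θ‖ = 1 := by
  simp [uvec, EuclideanSpace.norm_eq, Fin.sum_univ_two]

lemma abs_inner_uvec_le (v : Plane) (θ : ℝ) : |⟪v, uvec θ⟫| ≤ ‖v‖ := by
  simpa [norm_uvec] using abs_real_inner_le_norm v (uvec θ)

@[fun_prop]
lemma continuous_inner_uvec (v : Plane) : Continuous fun θ => ⟪v, uvec θ⟫ := by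
  simp only [inner_uvec]; fun_prop

lemma inner_uvec_add_two_pi (v : Plane) (θ : ℝ) : ⟪v, uvec (θ + 2 * π)⟫ = ⟪v, uvec θ⟫ := by
  simp only [inner_uvec, cos_add_two_pi, sin_add_two_pi]

lemma inner_uvec_add_pi (v : Plane) (θ : ℝ) : ⟪v, uvec (θ + π)⟫ = -⟪v, uvec θ⟫ := by
  rw [inner_uvec, inner_uvec, cos_add_pi, sin_add_pi]; ring

lemma exists_inner_uvec_eq_norm_mul_cos (v : Plane) :
    ∃ φ, ∀ θ, ⟪v, uvec θ⟫ = ‖v‖ * cos (θ - φ) := by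
  set z := Complex.orthonormalBasisOneI.repr.symm v
  have hz : ‖z‖ = ‖v‖ := LinearIsometryEquiv.norm_map _ v
  refine ⟨z.arg, fun θ => ?_⟩
  have hre : ‖z‖ * cos z.arg = v 0 := by simp [Complex.norm_mul_cos_arg, z]
  have him : ‖z‖ * sin z.arg = v 1 := by simp [Complex.norm_mul_sin_arg, z]
  rw [inner_uvec, ← hre, ← him, ← hz, cos_sub]; ring

lemma integral_abs_cos : ∫ θ in (0:ℝ)..(2 * π), |cos θ| = 4 := by
  have hper : Function.Periodic (fun θ => |cos θ|) π := fun θ => by simp [cos_add_pi]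
  have hcos : ∫ θ in (-(π / 2))..(π / 2), |cos θ| = 2 := by
    rw [integral_congr fun θ hθ => abs_of_nonneg (cos_nonneg_of_mem_Icc ?_), integral_cos]
    · simp only [sin_pi_div_two, sin_neg, sub_neg_eq_add]; norm_num
    · rwa [uIcc_of_le (by linarith [pi_pos])] at hθ
  have := hper.intervalIntegral_add_zsmul_eq 2 0 fun _ _ =>
    continuous_cos.abs.intervalIntegrable _ _
  rw [hper.intervalIntegral_add_eq 0 (-(π / 2)), show -(π / 2) + π = π / 2 by ring, hcos] at this
  norm_num [two_mul] at this ⊢; linarith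

lemma integral_inner_uvec (v : Plane) : ∫ θ in (0:ℝ)..(2 * π), ⟪v, uvec θ⟫ = 0 := by
  simp only [inner_uvec]
  rw [integral_add (Continuous.intervalIntegrable (by fun_prop) _ _)
    (Continuous.intervalIntegrable (by fun_prop) _ _), integral_const_mul, integral_const_mul,
    integral_cos, integral_sin]
  simp

lemma integral_abs_inner_uvec (v : Plane) :
    ∫ θ in (0:ℝ)..(2 * π), |⟪v, uvec θ⟫| = 4 * ‖v‖ := by
  obtain ⟨φ, hφ⟩ := exists_inner_uvec_eq_norm_mul_cos v
  have hper : Function.Periodic (fun θ => |cos θ|) (2 * π) := fun θ => by simp [cos_add_two_pi]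
  simp only [hφ, abs_mul, abs_norm, integral_const_mul,
    integral_comp_sub_right (fun θ => |cos θ|)]
  rw [show 2 * π - φ = -φ + 2 * π by ring, ← zero_sub, hper.intervalIntegral_add_eq _ 0,
    zero_add, integral_abs_cos, mul_comm]

lemma abs_min_add_abs_max (a b : ℝ) : |min a b| + |max a b| = |a| + |b| := by
  rcases le_total a b with h | h <;> simp [h, add_comm]

lemma max_min_zero_eq (a b : ℝ) :
    max (min a b) 0 = ((a + b - |a - b|) / 2 + |min a b|) / 2 := by
  rw [min_def]
  split_ifs with h
  · rw [abs_of_nonpos (sub_nonpos.2 h)]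
    rcases le_total a 0 with h0 | h0
    · rw [max_eq_right h0, abs_of_nonpos h0]; ring
    · rw [max_eq_left h0, abs_of_nonneg h0]; ring
  · rw [abs_of_nonneg (sub_nonneg.2 (le_of_not_ge h))]
    rcases le_total b 0 with h0 | h0
    · rw [max_eq_right h0, abs_of_nonpos h0]; ring
    · rw [max_eq_left h0, abs_of_nonneg h0]; ring

/-- Translating by `π` turns the `min` of the two linear forms into minus their `max`, so `|min|`
and `|max|` have the same integral, and `|min| + |max| = |⟪v, u⟫| + |⟪w, u⟫|` computes it. -/
lemma integral_abs_min_inner_uvec (v w : Plane) :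
    ∫ θ in (0:ℝ)..(2 * π), |min ⟪v, uvec θ⟫ ⟪w, uvec θ⟫| = 2 * ‖v‖ + 2 * ‖w‖ := by
  have hmin : Continuous fun θ => |min ⟪v, uvec θ⟫ ⟪w, uvec θ⟫| := by fun_prop
  have hmax : Continuous fun θ => |max ⟪v, uvec θ⟫ ⟪w, uvec θ⟫| := by fun_prop
  have hper : Function.Periodic (fun θ => |min ⟪v, uvec θ⟫ ⟪w, uvec θ⟫|) (2 * π) :=
    fun θ => by simp only [inner_uvec_add_two_pi]
  have hshift : ∫ θ in (0:ℝ)..(2 * π), |max ⟪v, uvec θ⟫ ⟪w, uvec θ⟫|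
      = ∫ θ in (0:ℝ)..(2 * π), |min ⟪v, uvec θ⟫ ⟪w, uvec θ⟫| := by
    simp only [← abs_neg (max _ _), ← min_neg_neg, ← inner_uvec_add_pi]
    rw [integral_comp_add_right (fun θ => |min ⟪v, uvec θ⟫ ⟪w, uvec θ⟫|), zero_add,
      show 2 * π + π = π + 2 * π by ring, hper.intervalIntegral_add_eq π 0, zero_add]
  have hsum := integral_add (hmin.intervalIntegrable (μ := MeasureTheory.volume) 0 (2 * π))
    (hmax.intervalIntegrable 0 (2 * π))
  simp only [abs_min_add_abs_max, hshift] at hsum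
  rw [integral_add ((continuous_inner_uvec v).abs.intervalIntegrable _ _)
    ((continuous_inner_uvec w).abs.intervalIntegrable _ _),
    integral_abs_inner_uvec, integral_abs_inner_uvec] at hsum
  linarith

lemma integral_max_min_inner_uvec_zero (v w : Plane) :
    ∫ θ in (0:ℝ)..(2 * π), max (min ⟪v, uvec θ⟫ ⟪w, uvec θ⟫) 0 = ‖v‖ + ‖w‖ - ‖v - w‖ := by
  have hint {f : ℝ → ℝ} (hf : Continuous f) : IntervalIntegrable f MeasureTheory.volume 0 (2 * π) :=
    hf.intervalIntegrable _ _
  simp only [max_min_zero_eq, ← inner_sub_left]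
  rw [integral_div, integral_add (hint (by fun_prop)) (hint (by fun_prop)), integral_div,
    integral_sub (hint (by fun_prop)) (hint (by fun_prop)),
    integral_add (hint (by fun_prop)) (hint (by fun_prop)), integral_inner_uvec,
    integral_inner_uvec, integral_abs_inner_uvec, integral_abs_min_inner_uvec]
  ring

def suppUpTo (q : ℕ → Plane) : ℕ → ℝ → ℝ
  | 0 => fun θ => ⟪q 0, uvec θ⟫
  | n + 1 => fun θ => max (suppUpTo q n θ) ⟪q (n + 1), uvec θ⟫

section suppUpTo

variable (q : ℕ → Plane)

@[fun_prop]
lemma continuous_suppUpTo (n : ℕ) : Continuous (suppUpTo q n) := by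
  induction n with
  | zero => exact continuous_inner_uvec _
  | succ n ih => exact ih.max (continuous_inner_uvec _)

variable {q}

lemma inner_uvec_le_suppUpTo {i n : ℕ} (hi : i ≤ n) (θ : ℝ) :
    ⟪q i, uvec θ⟫ ≤ suppUpTo q n θ := by
  induction n with
  | zero => rw [Nat.le_zero.mp hi]; rfl
  | succ n ih =>
    rcases hi.lt_or_eq with hi | rfl
    · exact (ih (Nat.lt_succ_iff.mp hi)).trans (le_max_left _ _)
    · exact le_max_right _ _

lemma suppUpTo_le {n : ℕ} {θ M : ℝ} (h : ∀ i ≤ n, ⟪q i, uvec θ⟫ ≤ M) :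
    suppUpTo q n θ ≤ M := by
  induction n with
  | zero => exact h 0 le_rfl
  | succ n ih => exact max_le (ih fun i hi => h i (hi.trans n.le_succ)) (h (n + 1) le_rfl)

lemma abs_suppUpTo_le {n : ℕ} {R : ℝ} (hR : ∀ i ≤ n, ‖q i‖ ≤ R) (θ : ℝ) :
    |suppUpTo q n θ| ≤ R := by
  have hq : ∀ i ≤ n, |⟪q i, uvec θ⟫| ≤ R := fun i hi => (abs_inner_uvec_le _ θ).trans (hR i hi)
  refine abs_le.2 ⟨?_, suppUpTo_le fun i hi => (abs_le.1 (hq i hi)).2⟩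
  exact (abs_le.1 (hq 0 n.zero_le)).1.trans (inner_uvec_le_suppUpTo n.zero_le θ)

lemma suppUpTo_succ_le (n : ℕ) (θ : ℝ) :
    suppUpTo q (n + 1) θ ≤ suppUpTo q n θ
      + max (min ⟪q (n + 1) - q n, uvec θ⟫ ⟪q (n + 1) - q 0, uvec θ⟫) 0 := by
  have hn := inner_uvec_le_suppUpTo (q := q) (le_refl n) θ
  have h0 := inner_uvec_le_suppUpTo (q := q) n.zero_le θ
  simp only [suppUpTo, inner_sub_left]
  refine max_le (le_add_of_nonneg_right (le_max_right _ _)) ?_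
  rw [← sub_le_iff_le_add']
  refine le_max_of_le_left (le_min ?_ ?_) <;> linarith

lemma integral_suppUpTo_le (n : ℕ) :
    ∫ θ in (0:ℝ)..(2 * π), suppUpTo q n θ
      ≤ ∑ i ∈ Finset.range n, ‖q (i + 1) - q i‖ + ‖q n - q 0‖ := by
  induction n with
  | zero => simp [suppUpTo, integral_inner_uvec]
  | succ n ih =>
    have hstep : ∫ θ in (0:ℝ)..(2 * π), suppUpTo q (n + 1) θ
        ≤ ∫ θ in (0:ℝ)..(2 * π), (suppUpTo q n θ
          + max (min ⟪q (n + 1) - q n, uvec θ⟫ ⟪q (n + 1) - q 0, uvec θ⟫) 0) :=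
      integral_mono_on two_pi_pos.le ((continuous_suppUpTo q (n + 1)).intervalIntegrable _ _)
        (Continuous.intervalIntegrable (by fun_prop) _ _)
        fun θ _ => suppUpTo_succ_le n θ
    rw [integral_add ((continuous_suppUpTo q n).intervalIntegrable _ _)
      (Continuous.intervalIntegrable (by fun_prop) _ _), integral_max_min_inner_uvec_zero,
      show q (n + 1) - q n - (q (n + 1) - q 0) = -(q n - q 0) by abel, norm_neg] at hstep
    rw [Finset.sum_range_succ]
    linarith

end suppUpTo

lemma BoundedVariationOn.sum_norm_sub_le {α E : Type*} [LinearOrder α]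
    [SeminormedAddCommGroup E] {f : α → E} {s : Set α} (hf : BoundedVariationOn f s)
    {n : ℕ} {u : ℕ → α} (hu : MonotoneOn u (Iic n)) (us : ∀ i ≤ n, u i ∈ s) :
    ∑ i ∈ Finset.range n, ‖f (u (i + 1)) - f (u i)‖ ≤ (eVariationOn f s).toReal := by
  calc ∑ i ∈ Finset.range n, ‖f (u (i + 1)) - f (u i)‖
      = (∑ i ∈ Finset.range n, edist (f (u (i + 1))) (f (u i))).toReal := by
        rw [ENNReal.toReal_sum fun _ _ => edist_ne_top _ _]
        simp only [edist_dist, dist_eq_norm, ENNReal.toReal_ofReal (norm_nonneg _)]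
    _ ≤ (eVariationOn f s).toReal :=
        ENNReal.toReal_mono hf (eVariationOn.sum_le_of_monotoneOn_Iic hu us)

lemma natCast_div_mem_Icc {i k : ℕ} (h : i ≤ k) : (i : ℝ) / k ∈ Icc (0 : ℝ) 1 :=
  ⟨by positivity, div_le_one_of_le₀ (Nat.cast_le.2 h) k.cast_nonneg⟩

section curve

variable {ξ : ℝ → Plane}

lemma integral_suppUpTo_sample_le (hbv : BoundedVariationOn ξ (Icc 0 1)) {k : ℕ}
    (hk : k ≠ 0) :
    ∫ θ in (0:ℝ)..(2 * π), suppUpTo (fun i => ξ (i / k)) k θ ≤ plen ξ + ‖ξ 1 - ξ 0‖ := by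
  have hmono : Monotone fun i : ℕ => (i : ℝ) / k :=
    fun i j h => div_le_div_of_nonneg_right (Nat.cast_le.2 h) k.cast_nonneg
  have hsum := hbv.sum_norm_sub_le (hmono.monotoneOn _) fun i => natCast_div_mem_Icc
  have hend : (k : ℝ) / k = 1 := div_self (Nat.cast_ne_zero.2 hk)
  have hpoly := integral_suppUpTo_le (q := fun i : ℕ => ξ (i / k)) k
  simp only [hend, Nat.cast_zero, zero_div] at hpoly
  push_cast at hsum hpoly
  rw [plen]
  linarith

lemma supp_image_eq_of_isMaxOn {s : Set ℝ} {t θ : ℝ} (ht : t ∈ s)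
    (hmax : IsMaxOn (fun t => ⟪ξ t, uvec θ⟫) s t) : supp (ξ '' s) θ = ⟪ξ t, uvec θ⟫ := by
  rw [supp, image_image]
  exact IsGreatest.csSup_eq ⟨mem_image_of_mem _ ht, by rintro _ ⟨x, hx, rfl⟩; exact hmax hx⟩

lemma tendsto_suppUpTo_sample (hcont : ContinuousOn ξ (Icc 0 1)) (θ : ℝ) :
    Tendsto (fun k : ℕ => suppUpTo (fun i => ξ (i / k)) k θ) atTop
      (𝓝 (supp (ξ '' Icc 0 1) θ)) := by
  have hinner : ContinuousOn (fun t => ⟪ξ t, uvec θ⟫) (Icc 0 1) :=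
    hcont.inner continuousOn_const
  obtain ⟨t, ht, hmax⟩ := isCompact_Icc.exists_isMaxOn (nonempty_Icc.2 zero_le_one) hinner
  rw [supp_image_eq_of_isMaxOn ht hmax]
  have hfloor : ∀ k : ℕ, ⌊t * k⌋₊ ≤ k := fun k =>
    Nat.floor_le_of_le (mul_le_of_le_one_left k.cast_nonneg ht.2)
  have hsample : Tendsto (fun k : ℕ => (⌊t * k⌋₊ : ℝ) / k) atTop (𝓝[Icc 0 1] t) :=
    tendsto_nhdsWithin_iff.2 ⟨(tendsto_nat_floor_mul_div_atTop ht.1).comp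
      tendsto_natCast_atTop_atTop, Eventually.of_forall fun k => natCast_div_mem_Icc (hfloor k)⟩
  exact tendsto_of_tendsto_of_tendsto_of_le_of_le ((hinner t ht).tendsto.comp hsample)
    tendsto_const_nhds
    (fun k => inner_uvec_le_suppUpTo (q := fun i : ℕ => ξ (i / k)) (hfloor k) θ)
    fun k => suppUpTo_le fun i hi => hmax (natCast_div_mem_Icc hi)

lemma tendsto_integral_suppUpTo_sample (hcont : ContinuousOn ξ (Icc 0 1)) :
    Tendsto (fun k : ℕ => ∫ θ in (0:ℝ)..(2 * π), suppUpTo (fun i => ξ (i / k)) k θ) atTop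
      (𝓝 (∫ θ in (0:ℝ)..(2 * π), supp (ξ '' Icc 0 1) θ)) := by
  obtain ⟨R, hR⟩ := isCompact_Icc.exists_bound_of_continuousOn hcont
  refine tendsto_integral_filter_of_dominated_convergence (fun _ => R)
    (Eventually.of_forall fun k => (continuous_suppUpTo _ k).aestronglyMeasurable)
    (Eventually.of_forall fun k => MeasureTheory.ae_of_all _ fun θ _ => ?_)
    intervalIntegrable_const
    (MeasureTheory.ae_of_all _ fun θ _ => tendsto_suppUpTo_sample hcont θ)
  exact abs_suppUpTo_le (fun i hi => hR _ (natCast_div_mem_Icc hi)) θ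

end curve

/-- For a continuous curve `ξ : [0,1] → ℝ²` of finite total variation
with image `C`, the arc length satisfies
`ℓ(ξ) ≥ ∫₀^{2π} h_C(θ) dθ − ‖ξ(1) − ξ(0)‖`. -/
theorem length_ge_integral_support_sub
    (ξ : ℝ → Plane)
    (hcont : ContinuousOn ξ (Icc 0 1))
    (hbv : BoundedVariationOn ξ (Icc 0 1)) :
    plen ξ ≥ (∫ θ in (0:ℝ)..(2 * π), supp (ξ '' Icc 0 1) θ) - ‖ξ 1 - ξ 0‖ := by
  have := le_of_tendsto (tendsto_integral_suppUpTo_sample hcont)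
    ((eventually_ne_atTop 0).mono fun _ hk => integral_suppUpTo_sample_le hbv hk)
  linarith
end
end

section
/- Let m = (ξ_A, ξ_B) be a compatible net counter-clockwise motion from P₀ to P₁, and let C_A = ξ_A([0,1]) and C_B = ξ_B([0,1]) be the traces. Then for every r ∈ [0,Δ], h_{C_A}(θ₀ + r) + h_{C_B}(θ₀ + r + π) ≥ s. -/
open Set Real RealInnerProductSpace

noncomputable section

/-- A compatible motion of two discs with radius sum `s` from placement `(A₀,B₀)`
to placement `(A₁,B₁)`. -/
structure IsCompatMotion (s : ℝ) (A₀ B₀ A₁ B₁ : Plane) (ξA ξB : ℝ → Plane) : Prop where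
  contA : ContinuousOn ξA (Icc 0 1)
  contB : ContinuousOn ξB (Icc 0 1)
  bvA : BoundedVariationOn ξA (Icc 0 1)
  bvB : BoundedVariationOn ξB (Icc 0 1)
  startA : ξA 0 = A₀
  stopA : ξA 1 = A₁
  startB : ξB 0 = B₀
  stopB : ξB 1 = B₁
  compat : ∀ t ∈ Icc (0:ℝ) 1, s ≤ ‖ξA t - ξB t‖

/-
At a time `t` at which the direction `θm t` of `ξA t - ξB t` equals `θm 0 + r` modulo `2π`
(such a time exists because the motion is net counter-clockwise), the inner products of
`ξA t` with `u(θ)` and of `ξB t` with `u(θ + π) = -u(θ)` add up to `‖ξA t - ξB t‖ ≥ s`, and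
each is bounded by the corresponding support function of the trace.
-/

lemma inner_uvec_self (θ : ℝ) : ⟪uvec θ, uvec θ⟫ = (1 : ℝ) := by
  simp only [uvec, PiLp.inner_apply, RCLike.inner_apply, conj_trivial, Fin.sum_univ_two,
    Matrix.cons_val_zero, Matrix.cons_val_one]
  nlinarith [sin_sq_add_cos_sq θ]

lemma uvec_add_two_pi_mul_int (θ : ℝ) (k : ℤ) : uvec (θ + 2 * π * k) = uvec θ := by
  rw [mul_comm (2 * π), uvec, cos_add_int_mul_two_pi, sin_add_int_mul_two_pi, uvec]

lemma uvec_add_pi (θ : ℝ) : uvec (θ + π) = -uvec θ := by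
  ext i
  fin_cases i <;> simp [uvec, cos_add_pi, sin_add_pi]

lemma le_supp_of_mem {C : Set Plane} (hC : Bornology.IsBounded C) {x : Plane} (hx : x ∈ C)
    (θ : ℝ) : ⟪x, uvec θ⟫ ≤ supp C θ :=
  le_csSup ((innerSLFlip ℝ (uvec θ)).lipschitz.isBounded_image hC).bddAbove ⟨x, hx, rfl⟩

lemma norm_sub_le_supp_add_supp_add_pi {C D : Set Plane} (hC : Bornology.IsBounded C)
    (hD : Bornology.IsBounded D) {a b : Plane} (ha : a ∈ C) (hb : b ∈ D) {θ : ℝ}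
    (hθ : a - b = ‖a - b‖ • uvec θ) :
    ‖a - b‖ ≤ supp C θ + supp D (θ + π) :=
  calc ‖a - b‖ = ⟪a - b, uvec θ⟫ := by
        rw [hθ, real_inner_smul_left, inner_uvec_self, mul_one, ← hθ]
    _ = ⟪a, uvec θ⟫ + ⟪b, uvec (θ + π)⟫ := by
        rw [inner_sub_left, uvec_add_pi, inner_neg_right, sub_eq_add_neg]
    _ ≤ supp C θ + supp D (θ + π) :=
        add_le_add (le_supp_of_mem hC ha θ) (le_supp_of_mem hD hb _)

theorem support_lower_bound_of_netCCW_general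
    (s : ℝ) (A₀ B₀ A₁ B₁ : Plane) (ξA ξB : ℝ → Plane)
    (hm : IsCompatMotion s A₀ B₀ A₁ B₁ ξA ξB)
    (θm : ℝ → ℝ)
    (hlift : ∀ t ∈ Icc (0:ℝ) 1, ξA t - ξB t = ‖ξA t - ξB t‖ • uvec (θm t))
    (Δ : ℝ)
    (hccw : ∀ r ∈ Icc 0 Δ, ∃ t ∈ Icc (0:ℝ) 1, ∃ k : ℤ, θm t = θm 0 + r + 2 * π * k) :
    ∀ r ∈ Icc 0 Δ,
      s ≤ supp (ξA '' Icc 0 1) (θm 0 + r) + supp (ξB '' Icc 0 1) (θm 0 + r + π) := by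
  intro r hr
  obtain ⟨t, ht, k, hk⟩ := hccw r hr
  have hdir : ξA t - ξB t = ‖ξA t - ξB t‖ • uvec (θm 0 + r) := by
    rw [← uvec_add_two_pi_mul_int _ k, ← hk]
    exact hlift t ht
  exact (hm.compat t ht).trans <| norm_sub_le_supp_add_supp_add_pi
    (isCompact_Icc.image_of_continuousOn hm.contA).isBounded
    (isCompact_Icc.image_of_continuousOn hm.contB).isBounded
    ⟨t, ht, rfl⟩ ⟨t, ht, rfl⟩ hdir

/-- for a compatible net counter-clockwise motion with traces
`C_A = ξA([0,1])` and `C_B = ξB([0,1])`, for every `r ∈ [0,Δ]`,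
`h_{C_A}(θ₀ + r) + h_{C_B}(θ₀ + r + π) ≥ s`. -/
theorem support_lower_bound_of_netCCW
    (s : ℝ) (hs : 0 < s) (A₀ B₀ A₁ B₁ : Plane) (ξA ξB : ℝ → Plane)
    (hm : IsCompatMotion s A₀ B₀ A₁ B₁ ξA ξB)
    (θm : ℝ → ℝ) (hθcont : ContinuousOn θm (Icc 0 1))
    (hlift : ∀ t ∈ Icc (0:ℝ) 1, ξA t - ξB t = ‖ξA t - ξB t‖ • uvec (θm t))
    (Δ : ℝ) (hΔ0 : 0 ≤ Δ) (hΔlt : Δ < 2 * π)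
    (hΔ : ∃ k : ℤ, θm 1 = θm 0 + Δ + 2 * π * k)
    (hccw : ∀ r ∈ Icc 0 Δ, ∃ t ∈ Icc (0:ℝ) 1, ∃ k : ℤ, θm t = θm 0 + r + 2 * π * k) :
    ∀ r ∈ Icc 0 Δ,
      s ≤ supp (ξA '' Icc 0 1) (θm 0 + r) + supp (ξB '' Icc 0 1) (θm 0 + r + π) :=
  support_lower_bound_of_netCCW_general s A₀ B₀ A₁ B₁ ξA ξB hm θm hlift Δ hccw
end
end

section
/- (Case 1: straight-line motions) Let P₀ = (A₀,B₀) and P₁ = (A₁,B₁) be compatible placements such that the Euclidean distance from A₀ to the segment [B₀,B₁] is at least s and the Euclidean distance from B₁ to the segment [A₀,A₁] is at least s. Then d(P₀,P₁) = ‖A₁ − A₀‖ + ‖B₁ − B₀‖, attained by the decoupled motion that first translates 𝔹 in a straight line from B₀ to B₁ (with 𝔸 fixed at A₀) and then translates 𝔸 in a straight line from A₀ to A₁ (with 𝔹 fixed at B₁). -/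
open Set Real RealInnerProductSpace

noncomputable section

/-- The set of lengths of compatible motions from `(A₀,B₀)` to `(A₁,B₁)`. -/
def motionLengths (s : ℝ) (A₀ B₀ A₁ B₁ : Plane) : Set ℝ :=
  {L | ∃ ξA ξB : ℝ → Plane, IsCompatMotion s A₀ B₀ A₁ B₁ ξA ξB ∧ L = plen ξA + plen ξB}

/-- The collision-free distance between placements. -/
def cfDist (s : ℝ) (A₀ B₀ A₁ B₁ : Plane) : ℝ := sInf (motionLengths s A₀ B₀ A₁ B₁)

/-!
Each curve is at least as long as the distance between its endpoints, so every compatible motion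
has length at least `‖A₁ - A₀‖ + ‖B₁ - B₀‖`. The decoupled motion attains this bound, and it is
compatible: while `𝔹` moves along `[B₀,B₁]`, `𝔸` rests at `A₀`; while `𝔸` moves along `[A₀,A₁]`,
`𝔹` rests at `B₁`.
-/

lemma eVariationOn_const_add_smul {α E : Type*} [LinearOrder α] [SeminormedAddCommGroup E]
    [NormedSpace ℝ E] (P v : E) (g : α → ℝ) (s : Set α) :
    eVariationOn (fun x => P + g x • v) s = ‖v‖ₑ * eVariationOn g s := by
  have hedist (x y : α) : edist (P + g x • v) (P + g y • v) = ‖v‖ₑ * edist (g x) (g y) := by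
    rw [edist_add_left, edist_eq_enorm_sub, edist_eq_enorm_sub, ← sub_smul, enorm_smul, mul_comm]
  simp only [eVariationOn, hedist, ← Finset.mul_sum, ENNReal.mul_iSup]

lemma eVariationOn_const_add_smul_of_monotoneOn {E : Type*} [SeminormedAddCommGroup E]
    [NormedSpace ℝ E] (P v : E) {g : ℝ → ℝ} (hg : MonotoneOn g (Icc 0 1)) (h0 : g 0 = 0)
    (h1 : g 1 = 1) : eVariationOn (fun t => P + g t • v) (Icc 0 1) = ‖v‖ₑ := by
  have hvar : eVariationOn g (Icc 0 1) = 1 := by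
    simpa [h0, h1] using hg.eVariationOn_eq (a := 0) (b := 1) (by simp) (by simp)
  rw [eVariationOn_const_add_smul, hvar, mul_one]

lemma dist_le_plen {ξ : ℝ → Plane} (hξ : BoundedVariationOn ξ (Icc 0 1)) :
    dist (ξ 0) (ξ 1) ≤ plen ξ :=
  hξ.dist_le (by simp) (by simp)

lemma plen_const_add_smul_of_monotoneOn (P v : Plane) {g : ℝ → ℝ}
    (hg : MonotoneOn g (Icc 0 1)) (h0 : g 0 = 0) (h1 : g 1 = 1) :
    plen (fun t => P + g t • v) = ‖v‖ := by
  rw [plen, eVariationOn_const_add_smul_of_monotoneOn P v hg h0 h1, toReal_enorm]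

lemma boundedVariationOn_const_add_smul_of_monotoneOn (P v : Plane) {g : ℝ → ℝ}
    (hg : MonotoneOn g (Icc 0 1)) (h0 : g 0 = 0) (h1 : g 1 = 1) :
    BoundedVariationOn (fun t => P + g t • v) (Icc 0 1) := by
  rw [BoundedVariationOn, eVariationOn_const_add_smul_of_monotoneOn P v hg h0 h1]
  exact enorm_ne_top

lemma IsCompatMotion.norm_sub_add_norm_sub_le_plen {s : ℝ} {A₀ B₀ A₁ B₁ : Plane}
    {ξA ξB : ℝ → Plane} (hm : IsCompatMotion s A₀ B₀ A₁ B₁ ξA ξB) :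
    ‖A₁ - A₀‖ + ‖B₁ - B₀‖ ≤ plen ξA + plen ξB := by
  have hA := dist_le_plen hm.bvA
  have hB := dist_le_plen hm.bvB
  rw [hm.startA, hm.stopA, dist_comm, dist_eq_norm] at hA
  rw [hm.startB, hm.stopB, dist_comm, dist_eq_norm] at hB
  exact add_le_add hA hB

lemma cfDist_eq_of_isCompatMotion {s : ℝ} {A₀ B₀ A₁ B₁ : Plane} {ξA ξB : ℝ → Plane}
    (hm : IsCompatMotion s A₀ B₀ A₁ B₁ ξA ξB)
    (hlen : plen ξA + plen ξB = ‖A₁ - A₀‖ + ‖B₁ - B₀‖) :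
    cfDist s A₀ B₀ A₁ B₁ = ‖A₁ - A₀‖ + ‖B₁ - B₀‖ := by
  refine IsLeast.csInf_eq ⟨⟨ξA, ξB, hm, hlen.symm⟩, ?_⟩
  rintro L ⟨ηA, ηB, hη, rfl⟩
  exact hη.norm_sub_add_norm_sub_le_plen

lemma monotone_min_two_mul_one : Monotone fun t : ℝ => min (2 * t) 1 :=
  fun _ _ h => min_le_min_right 1 (by linarith)

lemma monotone_max_two_mul_sub_one_zero : Monotone fun t : ℝ => max (2 * t - 1) 0 :=
  fun _ _ h => max_le_max_right 0 (by linarith)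

lemma isCompatMotion_straightLine {s : ℝ} {A₀ B₀ A₁ B₁ : Plane}
    (hA₀ : s ≤ Metric.infDist A₀ (segment ℝ B₀ B₁))
    (hB₁ : s ≤ Metric.infDist B₁ (segment ℝ A₀ A₁)) :
    IsCompatMotion s A₀ B₀ A₁ B₁
      (fun t => A₀ + max (2 * t - 1) 0 • (A₁ - A₀))
      (fun t => B₀ + min (2 * t) 1 • (B₁ - B₀)) where
  contA := by fun_prop
  contB := by fun_prop
  bvA := boundedVariationOn_const_add_smul_of_monotoneOn _ _
    (monotone_max_two_mul_sub_one_zero.monotoneOn _) (by norm_num) (by norm_num)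
  bvB := boundedVariationOn_const_add_smul_of_monotoneOn _ _
    (monotone_min_two_mul_one.monotoneOn _) (by norm_num) (by norm_num)
  startA := by norm_num
  stopA := by norm_num
  startB := by norm_num
  stopB := by norm_num
  compat t ht := by
    rcases le_or_gt t (1 / 2) with ht' | ht'
    · have hB : B₀ + min (2 * t) 1 • (B₁ - B₀) ∈ segment ℝ B₀ B₁ := by
        rw [segment_eq_image']
        exact mem_image_of_mem _ ⟨by simp [ht.1], min_le_right _ _⟩
      rw [max_eq_right (by linarith), zero_smul, add_zero, ← dist_eq_norm]
      exact hA₀.trans (Metric.infDist_le_dist_of_mem hB)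
    · have hA : A₀ + max (2 * t - 1) 0 • (A₁ - A₀) ∈ segment ℝ A₀ A₁ := by
        rw [segment_eq_image']
        exact mem_image_of_mem _ ⟨le_max_right _ _, max_le (by linarith [ht.2]) zero_le_one⟩
      rw [min_eq_right (by linarith), one_smul, add_sub_cancel, norm_sub_rev, ← dist_eq_norm]
      exact hB₁.trans (Metric.infDist_le_dist_of_mem hA)

theorem cfDist_of_straightLine_case_general
    (s : ℝ) (A₀ B₀ A₁ B₁ : Plane)
    (hA₀ : s ≤ Metric.infDist A₀ (segment ℝ B₀ B₁))
    (hB₁ : s ≤ Metric.infDist B₁ (segment ℝ A₀ A₁)) :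
    cfDist s A₀ B₀ A₁ B₁ = ‖A₁ - A₀‖ + ‖B₁ - B₀‖ ∧
    IsCompatMotion s A₀ B₀ A₁ B₁
      (fun t => A₀ + max (2 * t - 1) 0 • (A₁ - A₀))
      (fun t => B₀ + min (2 * t) 1 • (B₁ - B₀)) ∧
    plen (fun t => A₀ + max (2 * t - 1) 0 • (A₁ - A₀)) +
      plen (fun t => B₀ + min (2 * t) 1 • (B₁ - B₀)) = ‖A₁ - A₀‖ + ‖B₁ - B₀‖ := by
  have hm := isCompatMotion_straightLine hA₀ hB₁
  have hlen : plen (fun t => A₀ + max (2 * t - 1) 0 • (A₁ - A₀)) +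
      plen (fun t => B₀ + min (2 * t) 1 • (B₁ - B₀)) = ‖A₁ - A₀‖ + ‖B₁ - B₀‖ := by
    rw [plen_const_add_smul_of_monotoneOn _ _
        (monotone_max_two_mul_sub_one_zero.monotoneOn _) (by norm_num) (by norm_num),
      plen_const_add_smul_of_monotoneOn _ _
        (monotone_min_two_mul_one.monotoneOn _) (by norm_num) (by norm_num)]
  exact ⟨cfDist_eq_of_isCompatMotion hm hlen, hm, hlen⟩

/-- Case 1, straight-line motions: if `A₀` is at distance at
least `s` from the segment `[B₀,B₁]` and `B₁` is at distance at least `s` from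
the segment `[A₀,A₁]`, then `d(P₀,P₁) = ‖A₁ − A₀‖ + ‖B₁ − B₀‖`, attained by the
decoupled motion which first translates `𝔹` in a straight line from `B₀` to
`B₁` and then translates `𝔸` in a straight line from `A₀` to `A₁`. -/
theorem cfDist_of_straightLine_case
    (s : ℝ) (hs : 0 < s) (A₀ B₀ A₁ B₁ : Plane)
    (hP₀ : s ≤ ‖A₀ - B₀‖) (hP₁ : s ≤ ‖A₁ - B₁‖)
    (hA₀ : s ≤ Metric.infDist A₀ (segment ℝ B₀ B₁))
    (hB₁ : s ≤ Metric.infDist B₁ (segment ℝ A₀ A₁)) :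
    cfDist s A₀ B₀ A₁ B₁ = ‖A₁ - A₀‖ + ‖B₁ - B₀‖ ∧
    IsCompatMotion s A₀ B₀ A₁ B₁
      (fun t => A₀ + max (2 * t - 1) 0 • (A₁ - A₀))
      (fun t => B₀ + min (2 * t) 1 • (B₁ - B₀)) ∧
    plen (fun t => A₀ + max (2 * t - 1) 0 • (A₁ - A₀)) +
      plen (fun t => B₀ + min (2 * t) 1 • (B₁ - B₀)) = ‖A₁ - A₀‖ + ‖B₁ - B₀‖ :=
  cfDist_of_straightLine_case_general s A₀ B₀ A₁ B₁ hA₀ hB₁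
end
end
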